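/- Under the assumptions of the soft-thresholding convergence theorem, suppose additionally that the two-sided bound (1−γ̃)‖y‖² ≤ ‖F(x̂)y‖² holds for all (K+k)-sparse y where x̂ is a K-sparse vector with F(x̂)x̂ = b, and that (c₂c₃/√(1−γ̃))‖b‖ < 1. Then the fixed point x_α satisfies ‖x_α − x̂‖₂ ≤ √(α c₂‖b‖) / (√(1−γ̃) − c₂c₃‖b‖). -/

import Mathlib

/-! The error `e = x_α - x̂` is `(K+k)`-sparse, so the restricted lower bound gives
`√(1-γ̃)‖e‖ ≤ ‖F(x̂)e‖ = ‖F(x̂)x_α - b‖`. Replacing `F(x̂)` by `F(x_α)` costs at most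
`‖F(x̂) - F(x_α)‖‖x_α‖ ≤ c₃‖e‖·c₂‖b‖`, and the energy bound leaves a residual
`‖F(x_α)x_α - b‖ ≤ √(αc₂‖b‖)`. The smallness condition lets the `‖e‖` terms be absorbed. -/

noncomputable section
open scoped BigOperators

/-- The `ℓ₁` norm of a vector. -/
def l1Norm {d : ℕ} (x : EuclideanSpace ℝ (Fin d)) : ℝ := ∑ i, |x i|

/-- Number of nonzero entries of a vector. -/
def suppCard {d : ℕ} (x : EuclideanSpace ℝ (Fin d)) : ℕ :=
  (Finset.univ.filter fun i => x i ≠ 0).card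

lemma l1Norm_nonneg {d : ℕ} (x : EuclideanSpace ℝ (Fin d)) : 0 ≤ l1Norm x :=
  Finset.sum_nonneg fun i _ => abs_nonneg (x i)

lemma suppCard_sub_le {d : ℕ} (x y : EuclideanSpace ℝ (Fin d)) :
    suppCard (x - y) ≤ suppCard x + suppCard y := by
  classical
  unfold suppCard
  calc (Finset.univ.filter fun i => (x - y) i ≠ 0).card
      ≤ (Finset.univ.filter fun i => x i ≠ 0 ∨ y i ≠ 0).card := by
        refine Finset.card_le_card fun i => ?_
        simp only [Finset.mem_filter, Finset.mem_univ, true_and]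
        contrapose!
        rintro ⟨hx, hy⟩
        simp [hx, hy]
    _ ≤ _ := by
        rw [Finset.filter_or]
        exact Finset.card_union_le _ _

lemma Real.sqrt_mul_le_of_mul_sq_le {c a b : ℝ} (ha : 0 ≤ a) (hb : 0 ≤ b)
    (h : c * a ^ 2 ≤ b ^ 2) : √c * a ≤ b := by
  calc √c * a = √(c * a ^ 2) := by rw [Real.sqrt_mul' c (sq_nonneg a), Real.sqrt_sq ha]
    _ ≤ √(b ^ 2) := Real.sqrt_le_sqrt h
    _ = b := Real.sqrt_sq hb

lemma norm_sub_le_div_of_residual_le {E G : Type*} [NormedAddCommGroup E] [NormedSpace ℝ E]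
    [NormedAddCommGroup G] [NormedSpace ℝ G] {A B : E →L[ℝ] G} {x x₀ : E} {b : G}
    {s L R ρ : ℝ} (hx₀ : A x₀ = b) (hlow : s * ‖x - x₀‖ ≤ ‖A (x - x₀)‖)
    (hAB : ‖A - B‖ ≤ L * ‖x - x₀‖) (hx : ‖x‖ ≤ R) (hres : ‖B x - b‖ ≤ ρ)
    (hgap : 0 < s - L * R) :
    ‖x - x₀‖ ≤ ρ / (s - L * R) := by
  have hsplit : A (x - x₀) = (B x - b) + (A - B) x := by
    rw [map_sub, hx₀, sub_apply]; abel
  have hpert : ‖(A - B) x‖ ≤ L * ‖x - x₀‖ * R :=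
    ((A - B).le_opNorm x).trans <|
      mul_le_mul hAB hx (norm_nonneg x) ((norm_nonneg _).trans hAB)
  have hmain : s * ‖x - x₀‖ ≤ ρ + L * ‖x - x₀‖ * R :=
    calc s * ‖x - x₀‖ ≤ ‖(B x - b) + (A - B) x‖ := hsplit ▸ hlow
      _ ≤ ‖B x - b‖ + ‖(A - B) x‖ := norm_add_le _ _
      _ ≤ ρ + L * ‖x - x₀‖ * R := add_le_add hres hpert
  rw [le_div_iff₀ hgap]
  linarith

theorem fixed_point_close_to_exact_solution_general
    {d n : ℕ}
    (F : EuclideanSpace ℝ (Fin d) → (EuclideanSpace ℝ (Fin d) →L[ℝ] EuclideanSpace ℝ (Fin n)))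
    (b : EuclideanSpace ℝ (Fin n)) (α : ℝ) (hα : 0 < α)
    (c₂ c₃ : ℝ)
    (γ' : ℝ) (hγ'1 : γ' < 1)
    -- constants for F as in the soft-thresholding theorems
    (h3 : ∀ x y, ‖F x - F y‖ ≤ c₃ * ‖x - y‖)
    -- the k-sparse fixed point x_α, with ‖x_α‖ ≤ c₂‖b‖ and its energy bound
    (k : ℕ) (K : ℝ) (xα : EuclideanSpace ℝ (Fin d)) (hxα_sparse : suppCard xα ≤ k)
    (hxα_norm : ‖xα‖ ≤ c₂ * ‖b‖)
    (hxα_energy : ‖F xα xα - b‖ ^ 2 + α * l1Norm xα ≤ α * c₂ * ‖b‖)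
    -- a K-sparse exact solution x̂
    (xh : EuclideanSpace ℝ (Fin d)) (hxh_sparse : (suppCard xh : ℝ) ≤ K)
    (hxh : F xh xh = b)
    -- restricted isometry lower bound at x̂ on (K+k)-sparse vectors
    (ha : ∀ y : EuclideanSpace ℝ (Fin d), (suppCard y : ℝ) ≤ K + k →
      (1 - γ') * ‖y‖ ^ 2 ≤ ‖F xh y‖ ^ 2)
    -- smallness condition
    (hsmall : (c₂ * c₃ / Real.sqrt (1 - γ')) * ‖b‖ < 1) :
    ‖xα - xh‖ ≤ Real.sqrt (α * c₂ * ‖b‖) / (Real.sqrt (1 - γ') - c₂ * c₃ * ‖b‖) := by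
  have hγ : 0 < √(1 - γ') := Real.sqrt_pos.2 (by linarith)
  have hgap : 0 < √(1 - γ') - c₃ * (c₂ * ‖b‖) := by
    rw [div_mul_eq_mul_div, div_lt_one hγ] at hsmall
    linarith
  have hsparse : (suppCard (xα - xh) : ℝ) ≤ K + k := by
    have hsub : (suppCard (xα - xh) : ℝ) ≤ suppCard xα + suppCard xh := by
      exact_mod_cast suppCard_sub_le xα xh
    have hα_sparse : (suppCard xα : ℝ) ≤ k := by exact_mod_cast hxα_sparse
    linarith
  have hres : ‖F xα xα - b‖ ≤ √(α * c₂ * ‖b‖) :=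
    Real.le_sqrt_of_sq_le <| by linarith [mul_nonneg hα.le (l1Norm_nonneg xα)]
  have hlow : √(1 - γ') * ‖xα - xh‖ ≤ ‖F xh (xα - xh)‖ :=
    Real.sqrt_mul_le_of_mul_sq_le (norm_nonneg _) (norm_nonneg _) (ha _ hsparse)
  have hlip : ‖F xh - F xα‖ ≤ c₃ * ‖xα - xh‖ := norm_sub_rev xα xh ▸ h3 xh xα
  convert norm_sub_le_div_of_residual_le hxh hlow hlip hxα_norm hres hgap using 2
  ring

/-- Proposition 4.7 of the paper: if the restricted isometry lower bound holds with `F(x̂)`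
for `(K+k)`-sparse vectors, where `x̂` is a `K`-sparse solution of `F(x̂)x̂ = b`, and
`(c₂c₃/√(1−γ̃))‖b‖ < 1`, then the soft-thresholding fixed point `x_α` satisfies
`‖x_α − x̂‖ ≤ √(αc₂‖b‖)/(√(1−γ̃) − c₂c₃‖b‖)`. -/
theorem fixed_point_close_to_exact_solution
    {d n : ℕ}
    (F : EuclideanSpace ℝ (Fin d) → (EuclideanSpace ℝ (Fin d) →L[ℝ] EuclideanSpace ℝ (Fin n)))
    (b : EuclideanSpace ℝ (Fin n)) (α : ℝ) (hα : 0 < α)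
    (c₁ c₂ c₃ : ℝ) (hc₁ : 0 < c₁) (hc₂ : 0 < c₂) (hc₃ : 0 < c₃)
    (γ' : ℝ) (hγ'0 : 0 < γ') (hγ'1 : γ' < 1)
    -- constants for F as in the soft-thresholding theorems
    (h1 : ∀ x, ‖F x‖ ≤ c₁)
    (h2 : ∀ x, ∃ z : EuclideanSpace ℝ (Fin d), F x z = b ∧ l1Norm z ≤ c₂ * ‖b‖)
    (h3 : ∀ x y, ‖F x - F y‖ ≤ c₃ * ‖x - y‖)
    -- the k-sparse fixed point x_α, with ‖x_α‖ ≤ c₂‖b‖ and its energy bound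
    (k : ℕ) (K : ℝ) (xα : EuclideanSpace ℝ (Fin d)) (hxα_sparse : suppCard xα ≤ k)
    (hxα_fix : ∀ y, ‖F xα xα - b‖ ^ 2 + α * l1Norm xα ≤ ‖F xα y - b‖ ^ 2 + α * l1Norm y)
    (hxα_norm : ‖xα‖ ≤ c₂ * ‖b‖)
    (hxα_energy : ‖F xα xα - b‖ ^ 2 + α * l1Norm xα ≤ α * c₂ * ‖b‖)
    -- a K-sparse exact solution x̂
    (xh : EuclideanSpace ℝ (Fin d)) (hxh_sparse : (suppCard xh : ℝ) ≤ K)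
    (hxh : F xh xh = b)
    -- restricted isometry lower bound at x̂ on (K+k)-sparse vectors
    (ha : ∀ y : EuclideanSpace ℝ (Fin d), (suppCard y : ℝ) ≤ K + k →
      (1 - γ') * ‖y‖ ^ 2 ≤ ‖F xh y‖ ^ 2)
    -- smallness condition
    (hsmall : (c₂ * c₃ / Real.sqrt (1 - γ')) * ‖b‖ < 1) :
    ‖xα - xh‖ ≤ Real.sqrt (α * c₂ * ‖b‖) / (Real.sqrt (1 - γ') - c₂ * c₃ * ‖b‖) :=
  fixed_point_close_to_exact_solution_general F b α hα c₂ c₃ γ' hγ'1 h3 k K xα hxα_sparse hxα_norm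
    hxα_energy xh hxh_sparse hxh ha hsmall
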